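/- Consider the general ansatz N^{μν,ρσ,λ} for an expression antisymmetric in μ↔ν, antisymmetric in ρ↔σ, and antisymmetric under exchanging the pair (μν) with (ρσ), built from six Lorentz-covariant monomials in anticommuting u's and one derivative du, with coefficients a₁,…,a₆ (as in the paper: a₁(d^λu^μ u^ν u^ρ u^σ − …) + a₂(d^μu^λ u^ν u^ρ u^σ − …) + a₃(d^μu^ν u^ρ u^σ u^λ − …) + a₄(d^μu^ρ u^ν u^σ u^λ ± seven more terms) + a₅ η-terms with d·u + a₆ η-terms with d·u). Then the constraint 𝒮_{σλ} N^{μν,ρσ,λ} = 0 (symmetrization of the cyclic sum over σ and λ slots as in 𝒮_{σλ}N(T^{μν},T^{ρσ})^{λ}=0, taken for all index values) forces a₁ = a₂ = a₃ = a₄ = a₅ = a₆ = 0, i.e. N^{μν,ρσ,λ} = 0. -/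

import Mathlib

/-- The Minkowski metric `η = diag(1,-1,-1,-1)` with rational values. -/
def etaQ (μ ν : Fin 4) : ℚ := if μ = ν then (if μ = (0 : Fin 4) then 1 else -1) else 0

/-- Index set for the odd generators: `inl μ` labels `u^μ`, `inr (ν,μ)` labels `d^ν u^μ`. -/
abbrev GIdx := Sum (Fin 4) (Fin 4 × Fin 4)

/-- The free Grassmann algebra on the generators `u^μ` and `d^νu^μ`. -/
noncomputable abbrev GrAlg := ExteriorAlgebra ℚ (GIdx → ℚ)

/-- The Grassmann-odd generator `u^μ`. -/
noncomputable def ug (μ : Fin 4) : GrAlg :=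
  ExteriorAlgebra.ι ℚ (Pi.single (Sum.inl μ) 1)

/-- The Grassmann-odd generator `d^ν u^μ` ("formal derivative"). -/
noncomputable def Dg (ν μ : Fin 4) : GrAlg :=
  ExteriorAlgebra.ι ℚ (Pi.single (Sum.inr (ν, μ)) 1)

/-- The divergence `d_α u^α = η_{αβ} d^α u^β`. -/
noncomputable def divu : GrAlg := ∑ α, ∑ β, etaQ α β • Dg α β

/-- The general six-parameter ansatz `N^{μν,ρσ,λ}` of Grigore (Section 4 (ix)),
antisymmetric in `μ↔ν`, in `ρ↔σ`, and under exchanging the pairs `(μν)` `(ρσ)`. -/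
noncomputable def Nansatz (a₁ a₂ a₃ a₄ a₅ a₆ : ℚ) (μ ν ρ σ lam : Fin 4) : GrAlg :=
    a₁ • (Dg lam μ * ug ν * ug ρ * ug σ - Dg lam ν * ug μ * ug ρ * ug σ
      - Dg lam ρ * ug σ * ug μ * ug ν + Dg lam σ * ug ρ * ug μ * ug ν)
  + a₂ • (Dg μ lam * ug ν * ug ρ * ug σ - Dg ν lam * ug μ * ug ρ * ug σ
      - Dg ρ lam * ug σ * ug μ * ug ν + Dg σ lam * ug ρ * ug μ * ug ν)
  + a₃ • (Dg μ ν * ug ρ * ug σ * ug lam - Dg ν μ * ug ρ * ug σ * ug lam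
      - Dg ρ σ * ug μ * ug ν * ug lam + Dg σ ρ * ug μ * ug ν * ug lam)
  + a₄ • (Dg μ ρ * ug ν * ug σ * ug lam - Dg ν ρ * ug μ * ug σ * ug lam
      - Dg μ σ * ug ν * ug ρ * ug lam + Dg ν σ * ug μ * ug ρ * ug lam
      - Dg ρ μ * ug σ * ug ν * ug lam + Dg σ μ * ug ρ * ug ν * ug lam
      + Dg ρ ν * ug σ * ug μ * ug lam - Dg σ ν * ug ρ * ug μ * ug lam)
  + a₅ • ((etaQ μ lam • (ug ν * ug ρ * ug σ) - etaQ ν lam • (ug μ * ug ρ * ug σ)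
      - etaQ ρ lam • (ug σ * ug μ * ug ν) + etaQ σ lam • (ug ρ * ug μ * ug ν)) * divu)
  + a₆ • ((etaQ μ ρ • (ug ν * ug σ * ug lam) - etaQ ν ρ • (ug μ * ug σ * ug lam)
      - etaQ μ σ • (ug ν * ug ρ * ug lam) + etaQ ν σ • (ug μ * ug ρ * ug lam)) * divu)

/-!
Every coefficient of `𝒮_{σλ} N^{μν,ρσ,λ}` in the monomial basis of the Grassmann algebra is a
linear form in `a₁, …, a₆` that must vanish. Six suitable coefficients give `a₅ = 0`, `a₆ = a₅`,
`a₄ = a₁`, `a₄ = a₂`, `a₃ = -a₂` and `a₃ = a₁`; hence `a₁ = -a₁`, so `a₁ = 0` and all others vanish.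
-/

theorem Matrix.det_fin_four {R : Type*} [CommRing R] (A : Matrix (Fin 4) (Fin 4) R) : A.det =
    A 0 0 * (A 1 1 * (A 2 2 * A 3 3 - A 2 3 * A 3 2) - A 1 2 * (A 2 1 * A 3 3 - A 2 3 * A 3 1)
      + A 1 3 * (A 2 1 * A 3 2 - A 2 2 * A 3 1))
  - A 0 1 * (A 1 0 * (A 2 2 * A 3 3 - A 2 3 * A 3 2) - A 1 2 * (A 2 0 * A 3 3 - A 2 3 * A 3 0)
      + A 1 3 * (A 2 0 * A 3 2 - A 2 2 * A 3 0))
  + A 0 2 * (A 1 0 * (A 2 1 * A 3 3 - A 2 3 * A 3 1) - A 1 1 * (A 2 0 * A 3 3 - A 2 3 * A 3 0)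
      + A 1 3 * (A 2 0 * A 3 1 - A 2 1 * A 3 0))
  - A 0 3 * (A 1 0 * (A 2 1 * A 3 2 - A 2 2 * A 3 1) - A 1 1 * (A 2 0 * A 3 2 - A 2 2 * A 3 0)
      + A 1 2 * (A 2 0 * A 3 1 - A 2 1 * A 3 0)) := by
  rw [Matrix.det_succ_row_zero, Fin.sum_univ_four]
  simp only [Matrix.det_fin_three, Matrix.submatrix_apply, Fin.succAbove, Fin.reduceLT,
    Fin.reduceCastSucc, Fin.reduceSucc, reduceIte, Fin.coe_ofNat_eq_mod]
  ring

namespace ExteriorAlgebra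

variable {R κ : Type*} [CommRing R]

/-- For injective `g`, the coefficient of `e (g 0) ⋯ e (g (n-1))`, where `e` is the standard
basis of `κ → R`. -/
noncomputable def monomialCoeff {n : ℕ} (g : Fin n → κ) : ExteriorAlgebra R (κ → R) →ₗ[R] R :=
  liftAlternating fun m =>
    if h : m = n then h ▸ Matrix.detRowAlternating.compLinearMap (LinearMap.funLeft R R g) else 0

theorem monomialCoeff_ιMulti {n : ℕ} (g : Fin n → κ) (v : Fin n → κ → R) :
    monomialCoeff g (ιMulti R n v) = (Matrix.of fun i j => v i (g j)).det := by
  simp only [monomialCoeff, liftAlternating_apply_ιMulti, reduceDIte,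
    AlternatingMap.compLinearMap_apply, Matrix.detRowAlternating]
  rfl

theorem monomialCoeff_ι_mul_ι_mul_ι_mul_ι (g : Fin 4 → κ) (w x y z : κ → R) :
    monomialCoeff g (ι R w * ι R x * ι R y * ι R z) =
      (Matrix.of fun i j => ![w, x, y, z] i (g j)).det := by
  simpa only [ιMulti_apply, List.ofFn_succ, List.ofFn_zero, List.prod_cons, List.prod_nil, mul_one,
    mul_assoc, Matrix.cons_val_zero, Matrix.cons_val_succ] using monomialCoeff_ιMulti g ![w, x, y, z]

end ExteriorAlgebra

open ExteriorAlgebra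

noncomputable def symmetrizedNansatz (a₁ a₂ a₃ a₄ a₅ a₆ : ℚ) (μ ν ρ σ lam : Fin 4) : GrAlg :=
  Nansatz a₁ a₂ a₃ a₄ a₅ a₆ μ ν ρ σ lam + Nansatz a₁ a₂ a₃ a₄ a₅ a₆ μ ν ρ lam σ

theorem monomialCoeff_symmetrizedNansatz (a₁ a₂ a₃ a₄ a₅ a₆ : ℚ) :
    monomialCoeff ![.inr (0, 0), .inl 0, .inl 1, .inl 3]
        (symmetrizedNansatz a₁ a₂ a₃ a₄ a₅ a₆ 0 1 2 2 3) = -a₅ ∧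
      monomialCoeff ![.inr (0, 1), .inl 0, .inl 2, .inl 3]
        (symmetrizedNansatz a₁ a₂ a₃ a₄ a₅ a₆ 0 1 2 0 3) = a₄ - a₁ ∧
      monomialCoeff ![.inr (1, 0), .inl 0, .inl 2, .inl 3]
        (symmetrizedNansatz a₁ a₂ a₃ a₄ a₅ a₆ 0 1 2 0 3) = a₄ - a₂ ∧
      monomialCoeff ![.inr (2, 0), .inl 0, .inl 1, .inl 3]
        (symmetrizedNansatz a₁ a₂ a₃ a₄ a₅ a₆ 0 1 2 0 3) = -a₃ - a₂ ∧
      monomialCoeff ![.inr (0, 2), .inl 0, .inl 1, .inl 3]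
        (symmetrizedNansatz a₁ a₂ a₃ a₄ a₅ a₆ 0 1 2 0 3) = a₃ - a₁ ∧
      monomialCoeff ![.inr (1, 1), .inl 1, .inl 2, .inl 3]
        (symmetrizedNansatz a₁ a₂ a₃ a₄ a₅ a₆ 0 1 2 0 3) = a₅ - a₆ := by
  refine ⟨?_, ?_, ?_, ?_, ?_, ?_⟩ <;>
  simp only [symmetrizedNansatz, Nansatz, divu, Fin.sum_univ_four, etaQ, ug, Dg,
    mul_add, smul_add, smul_sub, map_add, map_sub, map_neg, map_smul, smul_eq_mul,
    monomialCoeff_ι_mul_ι_mul_ι_mul_ι, Matrix.det_fin_four, Matrix.of_apply,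
    Matrix.cons_val_zero, Matrix.cons_val_one, Matrix.cons_val_two, Matrix.cons_val_three,
    Matrix.head_cons, Matrix.tail_cons, Pi.single_apply, Sum.inr.injEq, Sum.inl.injEq,
    Prod.mk.injEq, Fin.reduceEq, reduceCtorEq, reduceIte, and_self, and_false, false_and,
    mul_zero, zero_mul, mul_one, sub_zero, zero_sub, add_zero, zero_add, sub_self, neg_zero,
    neg_neg, smul_zero, zero_smul, one_smul, neg_smul, mul_neg, neg_mul] <;>
  ring

/-- The constraint `𝒮_{σλ} N^{μν,ρσ,λ} = 0` (symmetrization over the labels `σ`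
and `λ`, for all index values) forces `a₁ = ⋯ = a₆ = 0`. -/
theorem symmetrized_constraint_forces_trivial_solution
    (a₁ a₂ a₃ a₄ a₅ a₆ : ℚ)
    (hcon : ∀ μ ν ρ σ lam,
      Nansatz a₁ a₂ a₃ a₄ a₅ a₆ μ ν ρ σ lam
        + Nansatz a₁ a₂ a₃ a₄ a₅ a₆ μ ν ρ lam σ = 0) :
    a₁ = 0 ∧ a₂ = 0 ∧ a₃ = 0 ∧ a₄ = 0 ∧ a₅ = 0 ∧ a₆ = 0 := by
  have hcoeff (g : Fin 4 → GIdx) (μ ν ρ σ lam : Fin 4) :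
      monomialCoeff g (symmetrizedNansatz a₁ a₂ a₃ a₄ a₅ a₆ μ ν ρ σ lam) = 0 := by
    rw [symmetrizedNansatz, hcon, map_zero]
  obtain ⟨h₅, h₁₄, h₂₄, h₂₃, h₁₃, h₅₆⟩ := monomialCoeff_symmetrizedNansatz a₁ a₂ a₃ a₄ a₅ a₆
  rw [hcoeff] at h₅ h₁₄ h₂₄ h₂₃ h₁₃ h₅₆
  have ha₁ : a₁ = 0 := by linarith
  exact ⟨ha₁, by linarith, by linarith, by linarith, by linarith, by linarith⟩
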